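/- For any given β > 1 and any ε with 0 < ε ≤ 4β(H_1+H_2)² log β / min{H_1, H_2}, there exist a positive integer k_0′ and a positive constant a = a(ε, β, H_1, H_2) such that for all k > k_0′ and all sufficiently large n, ℙ(|Σ_{i=k}^n ΔM_{i+1}/T_{i+1}| ≥ ε) ≤ 2 e^{−a k}. -/

import Mathlib

/-!
Write `ΔM_{i+1} / T_{i+1} = ΔM_{i+1} / T_i - ΔM_{i+1} (1 / T_i - 1 / T_{i+1})`. Since `T_i` is
`ℱ_i`-measurable and grows at least linearly, `T_i ≥ i · min H_1 H_2`, and `|ΔM| ≤ 2 max H_1 H_2`,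
the first terms `D_i = ΔM_{i+1} / T_i` are martingale differences bounded by `c / i`, where
`c = 2 max H_1 H_2 / min H_1 H_2`. The conditional bound `exp x ≤ 1 + x + x²` gives
`𝔼 exp (λ ∑_{i ≥ k} D_i) ≤ exp (λ² ∑ c² / i²) ≤ exp (2 λ² c² / k)`, and Chernoff's bound with `λ`
proportional to `k` turns this into a tail `e^{-a k}`. The second sum telescopes to at most
`2 max H_1 H_2 / T_k`, which is below `ε / 2` once `k` is large.
-/

open MeasureTheory Filter Set Finset Real

theorem Real.exp_le_one_add_add_sq {x : ℝ} (hx : |x| ≤ 1) : exp x ≤ 1 + x + x ^ 2 := by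
  linarith [(abs_le.1 (abs_exp_sub_one_sub_id_le hx)).2]

lemma sum_Ico_inv_sq_le {k : ℕ} (hk : 1 ≤ k) (n : ℕ) : ∑ i ∈ Ico k n, ((i : ℝ) ^ 2)⁻¹ ≤ 2 / k := by
  obtain ⟨j, rfl⟩ : ∃ j, k = j + 1 := ⟨k - 1, by omega⟩
  calc ∑ i ∈ Ico (j + 1) n, ((i : ℝ) ^ 2)⁻¹ ≤ ∑ i ∈ Ioo j n, ((i : ℝ) ^ 2)⁻¹ :=
        sum_le_sum_of_subset_of_nonneg
          (fun i hi => by simp only [Finset.mem_Ico, Finset.mem_Ioo] at hi ⊢; omega)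
          (fun _ _ _ => by positivity)
    _ ≤ 2 / (j + 1 : ℕ) := by exact_mod_cast sum_Ioo_inv_sq_le j n

lemma abs_sum_mul_inv_sub_inv_le {x T : ℕ → ℝ} {K : ℝ} (hT_pos : ∀ i, 0 < T i)
    (hT_mono : ∀ i, T i ≤ T (i + 1)) (hx : ∀ i, |x i| ≤ K) (k n : ℕ) :
    |∑ i ∈ Ico k n, x i * ((T i)⁻¹ - (T (i + 1))⁻¹)| ≤ K / T k := by
  have hK : 0 ≤ K := (abs_nonneg _).trans (hx 0)
  have hstep : ∀ i, 0 ≤ (T i)⁻¹ - (T (i + 1))⁻¹ := fun i =>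
    sub_nonneg.2 (inv_anti₀ (hT_pos i) (hT_mono i))
  rcases lt_or_ge n k with hnk | hkn
  · rw [Finset.Ico_eq_empty (by omega), sum_empty, abs_zero]
    exact div_nonneg hK (hT_pos k).le
  calc |∑ i ∈ Ico k n, x i * ((T i)⁻¹ - (T (i + 1))⁻¹)|
      ≤ ∑ i ∈ Ico k n, |x i| * ((T i)⁻¹ - (T (i + 1))⁻¹) := by
        refine (abs_sum_le_sum_abs _ _).trans_eq (sum_congr rfl fun i _ => ?_)
        rw [abs_mul, abs_of_nonneg (hstep i)]
    _ ≤ ∑ i ∈ Ico k n, K * ((T i)⁻¹ - (T (i + 1))⁻¹) :=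
        sum_le_sum fun i _ => mul_le_mul_of_nonneg_right (hx i) (hstep i)
    _ = K * ((T k)⁻¹ - (T n)⁻¹) := by
        rw [← mul_sum, ← neg_sub (T n)⁻¹, ← sum_Ico_sub (fun i => (T i)⁻¹) hkn, ← sum_neg_distrib]
        simp only [neg_sub]
    _ ≤ K / T k := by
        rw [div_eq_mul_inv]
        exact mul_le_mul_of_nonneg_left (sub_le_self _ (inv_nonneg.2 (hT_pos n).le)) hK

lemma abs_sum_div_succ_sub_sum_div_le {x T : ℕ → ℝ} {K : ℝ} (hT_pos : ∀ i, 0 < T i)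
    (hT_mono : ∀ i, T i ≤ T (i + 1)) (hx : ∀ i, |x i| ≤ K) (k n : ℕ) :
    |∑ i ∈ Icc k n, x i / T (i + 1) - ∑ i ∈ Ico k (n + 1), x i / T i| ≤ K / T k := by
  have hsplit : ∑ i ∈ Icc k n, x i / T (i + 1) - ∑ i ∈ Ico k (n + 1), x i / T i
      = -∑ i ∈ Ico k (n + 1), x i * ((T i)⁻¹ - (T (i + 1))⁻¹) := by
    rw [← Finset.Ico_add_one_right_eq_Icc, ← sum_sub_distrib, ← sum_neg_distrib]
    exact Finset.sum_congr rfl fun i _ => by ring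
  rw [hsplit, abs_neg]
  exact abs_sum_mul_inv_sub_inv_le hT_pos hT_mono hx k (n + 1)

lemma nat_mul_le_of_add_le_succ {u : ℕ → ℝ} {m : ℝ} (h0 : 0 ≤ u 0) (h : ∀ n, u n + m ≤ u (n + 1))
    (n : ℕ) : n * m ≤ u n := by
  induction n with
  | zero => simpa using h0
  | succ n ih => push_cast; linarith [h n]

lemma min_le_ite_add_ite (b : Bool) {H11 H12 H21 H22 H1 H2 : ℝ} (hH1 : H1 = H11 + H21)
    (hH2 : H2 = H12 + H22) :
    min H1 H2 ≤ (if b then H11 else H12) + (if b then H21 else H22) := by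
  cases b <;> simp [hH1, hH2]

lemma abs_sub_mul_le {a b z : ℝ} (ha : 0 ≤ a) (hab : a ≤ b) (hz0 : 0 ≤ z) (hz1 : z ≤ 1) :
    |a - z * b| ≤ b := by
  rw [abs_le]; constructor <;> nlinarith

lemma abs_ite_sub_div_mul_le_max (b : Bool) {y₁ y₂ a₁ a₂ b₁ b₂ : ℝ} (hy₁ : 0 ≤ y₁) (hy₂ : 0 ≤ y₂)
    (ha₁ : 0 ≤ a₁) (hab₁ : a₁ ≤ b₁) (ha₂ : 0 ≤ a₂) (hab₂ : a₂ ≤ b₂) :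
    |if b then a₁ - y₁ / (y₁ + y₂) * b₁ else a₂ - y₁ / (y₁ + y₂) * b₂| ≤ max b₁ b₂ := by
  have hz0 : 0 ≤ y₁ / (y₁ + y₂) := by positivity
  have hz1 : y₁ / (y₁ + y₂) ≤ 1 := div_le_one_of_le₀ (by linarith) (by positivity)
  cases b
  · exact (abs_sub_mul_le ha₂ hab₂ hz0 hz1).trans (le_max_right _ _)
  · exact (abs_sub_mul_le ha₁ hab₁ hz0 hz1).trans (le_max_left _ _)

section

variable {Ω : Type*} {m m0 : MeasurableSpace Ω} {μ : Measure Ω}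

theorem integral_mul_exp_le_of_condExp_eq_zero [IsFiniteMeasure μ] (hm : m ≤ m0)
    {F D : Ω → ℝ} {c l : ℝ} (hF : StronglyMeasurable[m] F) (hF_nonneg : 0 ≤ F)
    (hF_int : Integrable F μ) (hD : AEStronglyMeasurable D μ) (hD_bdd : ∀ᵐ ω ∂μ, |D ω| ≤ c)
    (hD_cond : μ[D | m] =ᵐ[μ] 0) (hlc : |l| * c ≤ 1) :
    Integrable (fun ω => F ω * exp (l * D ω)) μ ∧
      ∫ ω, F ω * exp (l * D ω) ∂μ ≤ exp ((l * c) ^ 2) * ∫ ω, F ω ∂μ := by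
  have hD_int : Integrable D μ := (integrable_const c).mono' hD hD_bdd
  have hFD_int : Integrable (F * D) μ := hF_int.mul_bdd hD hD_bdd
  have hFD : ∫ ω, F ω * D ω ∂μ = 0 := calc
    _ = ∫ ω, μ[F * D | m] ω ∂μ := (integral_condExp hm).symm
    _ = ∫ ω, (F * μ[D | m]) ω ∂μ :=
        integral_congr_ae (condExp_mul_of_stronglyMeasurable_left hF hFD_int hD_int)
    _ = ∫ ω, (F * 0 : Ω → ℝ) ω ∂μ := integral_congr_ae hD_cond.mul_left
    _ = 0 := by simp
  have hbound : ∀ᵐ ω ∂μ, F ω * exp (l * D ω) ≤ (1 + (l * c) ^ 2) * F ω + l * (F ω * D ω) := by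
    filter_upwards [hD_bdd] with ω hω
    have hlD : |l * D ω| ≤ |l| * c := by rw [abs_mul]; gcongr
    have hsq : (l * D ω) ^ 2 ≤ (l * c) ^ 2 := by
      rw [← sq_abs, ← sq_abs (l * c), abs_mul l c, abs_of_nonneg ((abs_nonneg _).trans hω)]
      exact pow_le_pow_left₀ (abs_nonneg _) hlD 2
    calc F ω * exp (l * D ω) ≤ F ω * (1 + l * D ω + (l * c) ^ 2) :=
          mul_le_mul_of_nonneg_left (by linarith [exp_le_one_add_add_sq (hlD.trans hlc)])
            (hF_nonneg ω)
      _ = (1 + (l * c) ^ 2) * F ω + l * (F ω * D ω) := by ring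
  have hlFD_int : Integrable (fun ω => l * (F ω * D ω)) μ := hFD_int.const_mul l
  have hrhs_int : Integrable (fun ω => (1 + (l * c) ^ 2) * F ω + l * (F ω * D ω)) μ :=
    (hF_int.const_mul _).add hlFD_int
  have hint : Integrable (fun ω => F ω * exp (l * D ω)) μ := by
    refine hrhs_int.mono' ((hF.mono hm).aestronglyMeasurable.mul
      (continuous_exp.comp_aestronglyMeasurable (hD.const_mul l))) ?_
    filter_upwards [hbound] with ω hω
    rwa [Real.norm_of_nonneg (mul_nonneg (hF_nonneg ω) (exp_pos _).le)]
  refine ⟨hint, (integral_mono_ae hint hrhs_int hbound).trans ?_⟩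
  rw [integral_add (hF_int.const_mul _) hlFD_int, integral_const_mul,
    integral_const_mul, hFD, mul_zero, add_zero]
  gcongr
  · exact integral_nonneg hF_nonneg
  · linarith [add_one_le_exp ((l * c) ^ 2)]

theorem integral_exp_mul_sum_Ico_le [IsProbabilityMeasure μ] (ℱ : Filtration ℕ m0) {D : ℕ → Ω → ℝ}
    {c : ℕ → ℝ} {k : ℕ} {l : ℝ} (hD_meas : ∀ i, k ≤ i → StronglyMeasurable[ℱ (i + 1)] (D i))
    (hD_bdd : ∀ i, k ≤ i → ∀ᵐ ω ∂μ, |D i ω| ≤ c i)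
    (hD_cond : ∀ i, k ≤ i → μ[D i | ℱ i] =ᵐ[μ] 0) (hlc : ∀ i, k ≤ i → |l| * c i ≤ 1) (n : ℕ) :
    Integrable (fun ω => exp (l * ∑ i ∈ Ico k n, D i ω)) μ ∧
      ∫ ω, exp (l * ∑ i ∈ Ico k n, D i ω) ∂μ ≤ exp (l ^ 2 * ∑ i ∈ Ico k n, c i ^ 2) := by
  induction n with
  | zero => simp
  | succ n ih =>
    rcases lt_or_ge n k with hnk | hkn
    · rw [Finset.Ico_eq_empty (by omega)]; simp
    have hS : StronglyMeasurable[ℱ n] (fun ω => exp (l * ∑ i ∈ Ico k n, D i ω)) :=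
      continuous_exp.comp_stronglyMeasurable (((Finset.stronglyMeasurable_fun_sum _
        fun i hi => (hD_meas i (mem_Ico.1 hi).1).mono
          (ℱ.mono (Nat.succ_le_of_lt (mem_Ico.1 hi).2)))).const_mul l)
    obtain ⟨hint, hle⟩ := integral_mul_exp_le_of_condExp_eq_zero (ℱ.le n) hS
      (fun ω => (exp_pos _).le) ih.1 ((hD_meas n hkn).mono (ℱ.le _)).aestronglyMeasurable
      (hD_bdd n hkn) (hD_cond n hkn) (hlc n hkn)
    simp only [sum_Ico_succ_top hkn, mul_add, exp_add]
    refine ⟨hint, hle.trans ?_⟩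
    rw [mul_pow, mul_comm]
    gcongr
    exact ih.2

theorem measure_le_abs_le_of_integral_exp_le [IsFiniteMeasure μ] {S : Ω → ℝ} {l t v : ℝ}
    (hl : 0 ≤ l) (hpos_int : Integrable (fun ω => exp (l * S ω)) μ)
    (hneg_int : Integrable (fun ω => exp (-l * S ω)) μ)
    (hpos : ∫ ω, exp (l * S ω) ∂μ ≤ exp v) (hneg : ∫ ω, exp (-l * S ω) ∂μ ≤ exp v) :
    μ {ω | t ≤ |S ω|} ≤ ENNReal.ofReal (2 * exp (v - l * t)) := by
  have hsplit : {ω | t ≤ |S ω|} = {ω | t ≤ S ω} ∪ {ω | S ω ≤ -t} := by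
    ext ω; simp only [mem_ofPred_eq, mem_union, le_abs']; tauto
  have hright := ProbabilityTheory.measure_ge_le_exp_mul_mgf t hl hpos_int
  have hleft := ProbabilityTheory.measure_le_le_exp_mul_mgf (-t) (neg_nonpos.2 hl) hneg_int
  rw [← ofReal_measureReal, hsplit]
  refine ENNReal.ofReal_le_ofReal ((measureReal_union_le _ _).trans ?_)
  calc _ ≤ exp (-l * t) * exp v + exp (-l * t) * exp v := by
        gcongr
        · exact hright.trans (by gcongr; exact hpos)
        · exact hleft.trans (by rw [neg_mul_neg]; gcongr; exact hneg)
    _ = 2 * exp (v - l * t) := by rw [← exp_add]; ring_nf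

theorem measure_le_abs_sum_Ico_le [IsProbabilityMeasure μ] (ℱ : Filtration ℕ m0)
    {D : ℕ → Ω → ℝ} {c t : ℝ} {k : ℕ} (hc : 0 < c) (ht : 0 < t) (hk : 1 ≤ k)
    (hD_meas : ∀ i, k ≤ i → StronglyMeasurable[ℱ (i + 1)] (D i))
    (hD_bdd : ∀ i, k ≤ i → ∀ᵐ ω ∂μ, |D i ω| ≤ c / i)
    (hD_cond : ∀ i, k ≤ i → μ[D i | ℱ i] =ᵐ[μ] 0) (n : ℕ) :
    μ {ω | t ≤ |∑ i ∈ Ico k n, D i ω|} ≤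
      ENNReal.ofReal (2 * exp (-(min (t / (4 * c ^ 2)) c⁻¹ * t / 2) * k)) := by
  -- Chernoff's bound is used at `±r k`: `r ≤ c⁻¹` keeps every `r k · c / i ≤ 1`, where the
  -- quadratic bound on `exp` applies, and `r ≤ t / (4 c²)` makes the resulting variance term
  -- `2 r² c² k` at most half of the gain `r t k`.
  set r := min (t / (4 * c ^ 2)) c⁻¹
  have hr : 0 < r := by positivity
  have hk0 : (0 : ℝ) < k := by exact_mod_cast hk
  have hmgf : ∀ s, |s| = r * k → Integrable (fun ω => exp (s * ∑ i ∈ Ico k n, D i ω)) μ ∧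
      ∫ ω, exp (s * ∑ i ∈ Ico k n, D i ω) ∂μ ≤ exp (2 * r ^ 2 * c ^ 2 * k) := by
    intro s hs
    have hlc : ∀ i, k ≤ i → |s| * (c / i) ≤ 1 := by
      intro i hi
      have hki : (k : ℝ) ≤ i := by exact_mod_cast hi
      calc |s| * (c / i) = r * c * (k / i) := by rw [hs]; ring
        _ ≤ c⁻¹ * c * 1 := by
            gcongr
            · exact min_le_right _ _
            · exact div_le_one_of_le₀ hki (by positivity)
        _ = 1 := by field_simp
    refine (integral_exp_mul_sum_Ico_le ℱ hD_meas hD_bdd hD_cond hlc n).imp_right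
      fun h => h.trans (exp_le_exp.2 ?_)
    calc s ^ 2 * ∑ i ∈ Ico k n, (c / (i : ℝ)) ^ 2
        = (r * k) ^ 2 * c ^ 2 * ∑ i ∈ Finset.Ico k n, ((i : ℝ) ^ 2)⁻¹ := by
          rw [← sq_abs s, hs, mul_sum, mul_sum]
          exact Finset.sum_congr rfl fun i _ => by ring
      _ ≤ (r * k) ^ 2 * c ^ 2 * (2 / k) := by gcongr; exact sum_Ico_inv_sq_le hk n
      _ = 2 * r ^ 2 * c ^ 2 * k := by field_simp
  obtain ⟨hpos_int, hpos⟩ := hmgf (r * k) (abs_of_pos (by positivity))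
  obtain ⟨hneg_int, hneg⟩ := hmgf (-(r * k)) (by rw [abs_neg, abs_of_pos (by positivity)])
  refine (measure_le_abs_le_of_integral_exp_le (by positivity) hpos_int hneg_int hpos hneg).trans
    (ENNReal.ofReal_le_ofReal ?_)
  have hrt : r * (4 * c ^ 2) ≤ t := by
    rw [← le_div_iff₀ (by positivity)]; exact min_le_left _ _
  gcongr
  nlinarith [mul_pos hr hk0]

lemma condExp_sub_condExp_ae_eq_zero [IsFiniteMeasure μ] (hm : m ≤ m0) {f : Ω → ℝ}
    (hf : Integrable f μ) : μ[f - μ[f | m] | m] =ᵐ[μ] 0 := by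
  filter_upwards [condExp_sub hf integrable_condExp m] with ω hω
  rw [hω, condExp_of_stronglyMeasurable hm stronglyMeasurable_condExp integrable_condExp]
  simp

lemma ae_abs_sub_condExp_le {f : Ω → ℝ} {C : ℝ} (hf : ∀ᵐ ω ∂μ, |f ω| ≤ C) :
    ∀ᵐ ω ∂μ, |(f - μ[f | m]) ω| ≤ 2 * C := by
  filter_upwards [hf, ae_bdd_abs_condExp_of_ae_bdd_abs (m := m) hf] with ω h1 h2
  rw [Pi.sub_apply, two_mul]
  exact (abs_sub _ _).trans (add_le_add h1 h2)

lemma condExp_div_ae_eq_zero [IsFiniteMeasure μ] {ξ T : Ω → ℝ} {K b : ℝ} (hb : 0 < b)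
    (hξ_meas : AEStronglyMeasurable ξ μ) (hξ_bdd : ∀ᵐ ω ∂μ, |ξ ω| ≤ K)
    (hξ_cond : μ[ξ | m] =ᵐ[μ] 0) (hm : m ≤ m0) (hT_meas : Measurable[m] T)
    (hT : ∀ ω, b ≤ T ω) : μ[fun ω => ξ ω / T ω | m] =ᵐ[μ] 0 := by
  have hξ_int : Integrable ξ μ := (integrable_const K).mono' hξ_meas hξ_bdd
  have hT_inv : StronglyMeasurable[m] T⁻¹ := hT_meas.inv.stronglyMeasurable
  have hTξ_int : Integrable (T⁻¹ * ξ) μ := by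
    refine hξ_int.bdd_mul (c := b⁻¹) (hT_inv.mono hm).aestronglyMeasurable
      (ae_of_all _ fun ω => ?_)
    rw [Pi.inv_apply, norm_inv, Real.norm_of_nonneg (hb.le.trans (hT ω))]
    exact inv_anti₀ hb (hT ω)
  have hdiv : (fun ω => ξ ω / T ω) = T⁻¹ * ξ := by ext ω; simp [div_eq_inv_mul]
  rw [hdiv]
  filter_upwards [condExp_mul_of_stronglyMeasurable_left hT_inv hTξ_int hξ_int, hξ_cond]
    with ω h1 h2
  simp [h1, h2]

theorem exists_measure_le_abs_sum_div_le [IsProbabilityMeasure μ] (ℱ : Filtration ℕ m0)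
    {ξ T : ℕ → Ω → ℝ} {K δ : ℝ} (hK : 0 < K) (hδ : 0 < δ)
    (hξ_meas : ∀ i, StronglyMeasurable[ℱ (i + 1)] (ξ i)) (hξ_bdd : ∀ i, ∀ᵐ ω ∂μ, |ξ i ω| ≤ K)
    (hξ_cond : ∀ i, μ[ξ i | ℱ i] =ᵐ[μ] 0) (hT_meas : ∀ i, Measurable[ℱ i] (T i))
    (hT_pos : ∀ i ω, 0 < T i ω) (hT_mono : ∀ i ω, T i ω ≤ T (i + 1) ω)
    (hT_lin : ∀ i ω, δ * i ≤ T i ω) {ε : ℝ} (hε : 0 < ε) :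
    ∃ k0 : ℕ, ∃ a > (0 : ℝ), ∀ k > k0, ∀ n,
      μ {ω | ε ≤ |∑ i ∈ Icc k n, ξ i ω / T (i + 1) ω|} ≤ ENNReal.ofReal (2 * exp (-a * k)) := by
  set c := K / δ
  have hc : 0 < c := by positivity
  refine ⟨⌈2 * c / ε⌉₊, min (ε / 2 / (4 * c ^ 2)) c⁻¹ * (ε / 2) / 2, by positivity,
    fun k hk n => ?_⟩
  have hk1 : 1 ≤ k := by omega
  have hk0 : (0 : ℝ) < k := by exact_mod_cast hk1
  have hck : c / k ≤ ε / 2 := by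
    have : 2 * c / ε < k := (Nat.le_ceil _).trans_lt (by exact_mod_cast hk)
    rw [div_lt_iff₀ hε] at this
    rw [div_le_iff₀ hk0]; linarith
  have hD_bdd : ∀ i, k ≤ i → ∀ᵐ ω ∂μ, |ξ i ω / T i ω| ≤ c / i := by
    intro i hi
    have hi0 : (0 : ℝ) < i := by exact_mod_cast hk1.trans hi
    filter_upwards [hξ_bdd i] with ω hω
    rw [abs_div, abs_of_pos (hT_pos i ω), div_div]
    exact div_le_div₀ hK.le hω (by positivity) (hT_lin i ω)
  have hD_cond : ∀ i, k ≤ i → μ[fun ω => ξ i ω / T i ω | ℱ i] =ᵐ[μ] 0 := by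
    intro i hi
    have hi0 : (0 : ℝ) < i := by exact_mod_cast hk1.trans hi
    exact condExp_div_ae_eq_zero (mul_pos hδ hi0) ((hξ_meas i).mono (ℱ.le _)).aestronglyMeasurable
      (hξ_bdd i) (hξ_cond i) (ℱ.le i) (hT_meas i) (hT_lin i)
  have hD_meas : ∀ i, k ≤ i → StronglyMeasurable[ℱ (i + 1)] (fun ω => ξ i ω / T i ω) :=
    fun i _ => ((hξ_meas i).measurable.div
      ((hT_meas i).mono (ℱ.mono i.le_succ) le_rfl)).stronglyMeasurable
  have hsub : {ω | ε ≤ |∑ i ∈ Icc k n, ξ i ω / T (i + 1) ω|}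
      ≤ᵐ[μ] {ω | ε / 2 ≤ |∑ i ∈ Ico k (n + 1), ξ i ω / T i ω|} := by
    filter_upwards [ae_all_iff.2 hξ_bdd] with ω hω (hmem : ε ≤ _)
    have hrem :=
      abs_sum_div_succ_sub_sum_div_le (fun i => hT_pos i ω) (fun i => hT_mono i ω) hω k n
    have hTk : K / T k ω ≤ c / k := by
      rw [div_div]; exact div_le_div_of_nonneg_left hK.le (by positivity) (hT_lin k ω)
    show ε / 2 ≤ _
    linarith [abs_sub_abs_le_abs_sub (∑ i ∈ Icc k n, ξ i ω / T (i + 1) ω)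
      (∑ i ∈ Ico k (n + 1), ξ i ω / T i ω)]
  exact (measure_mono_ae hsub).trans
    (measure_le_abs_sum_Ico_le ℱ hc (half_pos hε) hk1 hD_meas hD_bdd hD_cond (n + 1))

end

theorem martingale_sum_exponential_decay_general
    (H11 H12 H21 H22 : ℝ)
    (hH11 : 0 ≤ H11) (hH22 : 0 ≤ H22) (hH12 : 0 < H12) (hH21 : 0 < H21)
    (H1 H2 : ℝ) (hH1 : H1 = H11 + H21) (hH2 : H2 = H12 + H22)
    {Ω : Type*} {m0 : MeasurableSpace Ω} {ℙ : Measure Ω} [IsProbabilityMeasure ℙ]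
    (ℱ : Filtration ℕ m0)
    (X : ℕ → Ω → Bool)
    (hX_meas : ∀ n : ℕ, Measurable[ℱ (n + 1)] (X (n + 1)))
    (Y1 Y2 : ℕ → Ω → ℝ)
    (hY1_meas : ∀ n : ℕ, Measurable[ℱ n] (Y1 n))
    (hY2_meas : ∀ n : ℕ, Measurable[ℱ n] (Y2 n))
    (hY1_ge : ∀ n ω, 1 ≤ Y1 n ω) (hY2_ge : ∀ n ω, 1 ≤ Y2 n ω)
    (T : ℕ → Ω → ℝ) (hT : ∀ n ω, T n ω = Y1 n ω + Y2 n ω)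
    (hupd1 : ∀ n ω, Y1 (n + 1) ω = Y1 n ω + (if X (n + 1) ω then H11 else H12))
    (hupd2 : ∀ n ω, Y2 (n + 1) ω = Y2 n ω + (if X (n + 1) ω then H21 else H22))
    (Z : ℕ → Ω → ℝ) (hZ : ∀ n ω, Z n ω = Y1 n ω / T n ω)
    (L : ℕ → Ω → ℝ)
    (hL : ∀ n ω, L (n + 1) ω =
      if X (n + 1) ω then H11 - Z n ω * H1 else H12 - Z n ω * H2)
    (ΔM : ℕ → Ω → ℝ)
    (hΔM : ∀ n : ℕ, ΔM (n + 1) = L (n + 1) - ℙ[L (n + 1) | ℱ n]) :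
    ∀ β > (1:ℝ), ∀ ε : ℝ, 0 < ε →
      ε ≤ 4 * β * (H1 + H2) ^ 2 * Real.log β / min H1 H2 →
      ∃ k0 : ℕ, ∃ a > (0:ℝ), ∀ k > k0, ∀ᶠ n in atTop,
        ℙ {ω | ε ≤ |∑ i ∈ Finset.Icc k n, ΔM (i + 1) ω / T (i + 1) ω|} ≤
          ENNReal.ofReal (2 * Real.exp (-a * k)) := by
  intro β _ ε hε _
  have hH1_pos : 0 < H1 := by rw [hH1]; linarith
  have hH2_pos : 0 < H2 := by rw [hH2]; linarith
  have hT_pos : ∀ n ω, 0 < T n ω := fun n ω => by linarith [hT n ω, hY1_ge n ω, hY2_ge n ω]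
  have hT_step : ∀ n ω, T n ω + min H1 H2 ≤ T (n + 1) ω := fun n ω => by
    linarith [hT n ω, hT (n + 1) ω, hupd1 n ω, hupd2 n ω, min_le_ite_add_ite (X (n + 1) ω) hH1 hH2]
  have hT_meas : ∀ n, Measurable[ℱ n] (T n) := fun n => by
    rw [show T n = Y1 n + Y2 n from funext (hT n)]
    exact (hY1_meas n).add (hY2_meas n)
  have hL_bdd : ∀ n ω, |L (n + 1) ω| ≤ max H1 H2 := fun n ω => by
    rw [hL, hZ, hT]
    exact abs_ite_sub_div_mul_le_max _ (by linarith [hY1_ge n ω]) (by linarith [hY2_ge n ω])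
      hH11 (by linarith) hH12.le (by linarith)
  have hL_meas : ∀ n, Measurable[ℱ (n + 1)] (L (n + 1)) := fun n => by
    have hZ_meas : Measurable[ℱ (n + 1)] (Z n) := by
      rw [show Z n = Y1 n / T n from funext (hZ n)]
      exact ((hY1_meas n).div (hT_meas n)).mono (ℱ.mono n.le_succ) le_rfl
    rw [funext (hL n)]
    exact .ite (hX_meas n (measurableSet_singleton true)) (by fun_prop) (by fun_prop)
  have hL_int : ∀ n, Integrable (L (n + 1)) ℙ := fun n =>
    (integrable_const (max H1 H2)).mono' ((hL_meas n).mono (ℱ.le _) le_rfl).aestronglyMeasurable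
      (ae_of_all _ (hL_bdd n))
  have hδ : 0 < min H1 H2 := lt_min hH1_pos hH2_pos
  obtain ⟨k0, a, ha, htail⟩ := exists_measure_le_abs_sum_div_le ℱ (ξ := fun i => ΔM (i + 1))
    (K := 2 * max H1 H2) (by positivity) hδ
    (fun n => hΔM n ▸ (hL_meas n).stronglyMeasurable.sub
      (stronglyMeasurable_condExp.mono (ℱ.mono n.le_succ)))
    (fun n => hΔM n ▸ ae_abs_sub_condExp_le (ae_of_all _ (hL_bdd n)))
    (fun n => hΔM n ▸ condExp_sub_condExp_ae_eq_zero (ℱ.le n) (hL_int n))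
    hT_meas hT_pos (fun n ω => by linarith [hT_step n ω])
    (fun n ω => by linarith [nat_mul_le_of_add_le_succ (hT_pos 0 ω).le (fun n => hT_step n ω) n])
    hε
  exact ⟨k0, a, ha, fun k hk => Eventually.of_forall (htail k hk)⟩

/-- Exponential decay in k for the tail of the martingale sums Σ_{i=k}^n ΔM_{i+1}/T_{i+1}. -/
theorem martingale_sum_exponential_decay
    (H11 H12 H21 H22 : ℝ)
    (hH11 : 0 ≤ H11) (hH22 : 0 ≤ H22) (hH12 : 0 < H12) (hH21 : 0 < H21)
    (H1 H2 : ℝ) (hH1 : H1 = H11 + H21) (hH2 : H2 = H12 + H22) (hHne : H1 ≠ H2)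
    (f : ℝ → ℝ)
    (hf_cont : ContinuousOn f (Set.Icc 0 1))
    (hf_mono : MonotoneOn f (Set.Icc 0 1))
    (hf_diff : DifferentiableOn ℝ f (Set.Icc 0 1))
    (hf0 : f 0 = 0) (hf1 : f 1 = 1)
    (hf_pos : ∀ x ∈ Set.Ioc (0:ℝ) 1, 0 < f x)
    {Ω : Type*} {m0 : MeasurableSpace Ω} {ℙ : Measure Ω} [IsProbabilityMeasure ℙ]
    (ℱ : Filtration ℕ m0)
    (X : ℕ → Ω → Bool)
    (hX_meas : ∀ n : ℕ, Measurable[ℱ (n + 1)] (X (n + 1)))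
    (Y1 Y2 : ℕ → Ω → ℝ)
    (hY1_meas : ∀ n : ℕ, Measurable[ℱ n] (Y1 n))
    (hY2_meas : ∀ n : ℕ, Measurable[ℱ n] (Y2 n))
    (hY1_ge : ∀ n ω, 1 ≤ Y1 n ω) (hY2_ge : ∀ n ω, 1 ≤ Y2 n ω)
    (T : ℕ → Ω → ℝ) (hT : ∀ n ω, T n ω = Y1 n ω + Y2 n ω)
    (hdraw1 : ∀ n : ℕ,
      ℙ[(fun ω => if X (n + 1) ω then (1 : ℝ) else 0) | ℱ n]
        =ᵐ[ℙ] fun ω => f (Y1 n ω / T n ω) / (f (Y1 n ω / T n ω) + f (Y2 n ω / T n ω)))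
    (hdraw2 : ∀ n : ℕ,
      ℙ[(fun ω => if X (n + 1) ω then (0 : ℝ) else 1) | ℱ n]
        =ᵐ[ℙ] fun ω => f (Y2 n ω / T n ω) / (f (Y1 n ω / T n ω) + f (Y2 n ω / T n ω)))
    (hupd1 : ∀ n ω, Y1 (n + 1) ω = Y1 n ω + (if X (n + 1) ω then H11 else H12))
    (hupd2 : ∀ n ω, Y2 (n + 1) ω = Y2 n ω + (if X (n + 1) ω then H21 else H22))
    (Z : ℕ → Ω → ℝ) (hZ : ∀ n ω, Z n ω = Y1 n ω / T n ω)
    (L : ℕ → Ω → ℝ)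
    (hL : ∀ n ω, L (n + 1) ω =
      if X (n + 1) ω then H11 - Z n ω * H1 else H12 - Z n ω * H2)
    (ΔM : ℕ → Ω → ℝ)
    (hΔM : ∀ n : ℕ, ΔM (n + 1) = L (n + 1) - ℙ[L (n + 1) | ℱ n]) :
    ∀ β > (1:ℝ), ∀ ε : ℝ, 0 < ε →
      ε ≤ 4 * β * (H1 + H2) ^ 2 * Real.log β / min H1 H2 →
      ∃ k0 : ℕ, ∃ a > (0:ℝ), ∀ k > k0, ∀ᶠ n in atTop,
        ℙ {ω | ε ≤ |∑ i ∈ Finset.Icc k n, ΔM (i + 1) ω / T (i + 1) ω|} ≤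
          ENNReal.ofReal (2 * Real.exp (-a * k)) :=
  martingale_sum_exponential_decay_general H11 H12 H21 H22 hH11 hH22 hH12 hH21 H1 H2 hH1 hH2 ℱ X
    hX_meas Y1 Y2 hY1_meas hY2_meas hY1_ge hY2_ge T hT hupd1 hupd2 Z hZ L hL ΔM hΔM
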